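/- Let H = (U, E) be a dihypergraph that is not body-connected and let C be a body-connected component of H. Then H is H-decomposable if and only if both H[C] and H[U \ C] are H-decomposable. -/

import Mathlib

variable {α : Type*} [DecidableEq α]

/-- A dihypergraph: finite vertex set `U`, edges `(B, h)` with nonempty body
`B ⊆ U` and head `h ∈ U \ B`. -/
structure Dihypergraph (α : Type*) [DecidableEq α] where
  U : Finset α
  E : Finset (Finset α × α)
  body_nonempty : ∀ e ∈ E, e.1.Nonempty
  body_sub : ∀ e ∈ E, e.1 ⊆ U
  head_mem : ∀ e ∈ E, e.2 ∈ U
  head_notin : ∀ e ∈ E, e.2 ∉ e.1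

namespace Dihypergraph

/-- Two vertices are body-connected if joined by a body-path: a chain of edge
bodies in which consecutive bodies share vertices (each vertex is
body-connected to itself). -/
def BodyConn (H : Dihypergraph α) (v v' : α) : Prop :=
  Relation.ReflTransGen (fun x y => ∃ e ∈ H.E, x ∈ e.1 ∧ y ∈ e.1) v v'

/-- A dihypergraph is body-connected if every pair of its vertices is body-connected. -/
def BodyConnected (H : Dihypergraph α) : Prop :=
  ∀ v ∈ H.U, ∀ v' ∈ H.U, H.BodyConn v v'

/-- A split: a bipartition of the vertex set into two nonempty parts such that
every edge's body is entirely contained in one of the parts. -/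
def IsSplit (H : Dihypergraph α) (U1 U2 : Finset α) : Prop :=
  U1.Nonempty ∧ U2.Nonempty ∧ U1 ∪ U2 = H.U ∧ Disjoint U1 U2 ∧
    ∀ e ∈ H.E, e.1 ⊆ U1 ∨ e.1 ⊆ U2

/-- Induced subhypergraph on `W`: keeps exactly the edges fully contained in `W`. -/
def induced (H : Dihypergraph α) (W : Finset α) : Dihypergraph α where
  U := W
  E := H.E.filter (fun e => e.1 ⊆ W ∧ e.2 ∈ W)
  body_nonempty e he := H.body_nonempty e (Finset.mem_filter.mp he).1
  body_sub e he := (Finset.mem_filter.mp he).2.1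
  head_mem e he := (Finset.mem_filter.mp he).2.2
  head_notin e he := H.head_notin e (Finset.mem_filter.mp he).1

/-- A body-connected component: a maximal (nonempty) subset of the vertex set
in which every pair of vertices is body-connected. -/
def IsBodyComponent (H : Dihypergraph α) (C : Finset α) : Prop :=
  C.Nonempty ∧ C ⊆ H.U ∧ (∀ v ∈ C, ∀ v' ∈ C, H.BodyConn v v') ∧
    ∀ C', C ⊆ C' → C' ⊆ H.U → (∀ v ∈ C', ∀ v' ∈ C', H.BodyConn v v') → C' = C

/-- H-decomposability: either a single vertex, or there is a split whose two
induced subhypergraphs are both H-decomposable. -/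
inductive HDecomposable : Dihypergraph α → Prop
  | single (H : Dihypergraph α) (h : H.U.card = 1) : HDecomposable H
  | split (H : Dihypergraph α) (U1 U2 : Finset α) (hs : H.IsSplit U1 U2)
      (h1 : HDecomposable (H.induced U1)) (h2 : HDecomposable (H.induced U2)) :
      HDecomposable H

/-- A set `F ⊆ U` is closed if every edge whose body lies in `F` has its head in `F`. -/
def Closed (H : Dihypergraph α) (F : Finset α) : Prop :=
  F ⊆ H.U ∧ ∀ e ∈ H.E, e.1 ⊆ F → e.2 ∈ F

/-- One step of forward chaining. -/
def step (H : Dihypergraph α) (X : Finset α) : Finset α :=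
  X ∪ (H.E.filter (fun e => e.1 ⊆ X)).image Prod.snd

end Dihypergraph

open Dihypergraph

lemma Dihypergraph.ext' {H1 H2 : Dihypergraph α} (hU : H1.U = H2.U) (hE : H1.E = H2.E) :
    H1 = H2 := by
  cases H1; cases H2; simp_all

lemma bodyConn_symm {H : Dihypergraph α} {v v' : α} (h : H.BodyConn v v') :
    H.BodyConn v' v := by
  have hsym : Symmetric (fun x y => ∃ e ∈ H.E, x ∈ e.1 ∧ y ∈ e.1) := by
    rintro x y ⟨e, he, hx, hy⟩; exact ⟨e, he, hy, hx⟩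
  exact (@Relation.ReflTransGen.stdSymm _ _ ⟨hsym⟩).symm _ _ h

lemma body_subset_or_disjoint {H : Dihypergraph α} {C : Finset α}
    (hC : H.IsBodyComponent C) {e : Finset α × α} (he : e ∈ H.E) :
    e.1 ⊆ C ∨ Disjoint e.1 C := by
  by_cases hd : Disjoint e.1 C
  · exact Or.inr hd
  · left
    obtain ⟨x, hx1, hxC⟩ := Finset.not_disjoint_iff.mp hd
    have connTox : ∀ a ∈ C ∪ e.1, H.BodyConn x a := by
      intro a ha
      rcases Finset.mem_union.mp ha with h | h
      · exact hC.2.2.1 x hxC a h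
      · exact Relation.ReflTransGen.single ⟨e, he, hx1, h⟩
    have key : C ∪ e.1 = C := by
      refine hC.2.2.2 (C ∪ e.1) Finset.subset_union_left
        (Finset.union_subset hC.2.1 (H.body_sub e he)) ?_
      intro a ha b hb
      exact (bodyConn_symm (connTox a ha)).trans (connTox b hb)
    exact fun y hy => key ▸ Finset.mem_union_right C hy

lemma induced_induced (H : Dihypergraph α) {W V : Finset α} (h : W ⊆ V) :
    (H.induced V).induced W = H.induced W := by
  apply Dihypergraph.ext'
  · rfl
  · ext e
    simp only [induced, Finset.mem_filter]
    constructor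
    · rintro ⟨⟨he, _⟩, hb, hh⟩; exact ⟨he, hb, hh⟩
    · rintro ⟨he, hb, hh⟩; exact ⟨⟨he, hb.trans h, h hh⟩, hb, hh⟩

lemma induced_decomposable {H : Dihypergraph α} (h : HDecomposable H) :
    ∀ W : Finset α, W ⊆ H.U → W.Nonempty →
      (∀ e ∈ H.E, e.1 ⊆ W ∨ Disjoint e.1 W) → HDecomposable (H.induced W) := by
  induction h with
  | single H h1 =>
    intro W hWU hWne _
    have : W = H.U := Finset.eq_of_subset_of_card_le hWU
      (by rw [h1]; exact Finset.card_pos.mpr hWne)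
    exact HDecomposable.single _ (by simp [induced, this, h1])
  | split H U1 U2 hs h1 h2 ih1 ih2 =>
    intro W hWU hWne hdich
    obtain ⟨hne1, hne2, hcup, hdisj, hbody⟩ := hs
    set W1 := W ∩ U1 with hW1
    set W2 := W ∩ U2 with hW2
    have hWsplit : W1 ∪ W2 = W := by
      rw [hW1, hW2, ← Finset.inter_union_distrib_left, hcup,
        Finset.inter_eq_left.mpr hWU]
    by_cases hne1' : W1.Nonempty
    · by_cases hne2' : W2.Nonempty
      · -- both nonempty: split
        refine HDecomposable.split _ W1 W2 ⟨hne1', hne2', ?_, ?_, ?_⟩ ?_ ?_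
        · simpa [induced] using hWsplit
        · exact hdisj.mono Finset.inter_subset_right Finset.inter_subset_right
        · intro e he
          simp only [induced, Finset.mem_filter] at he
          obtain ⟨heE, hbW, _⟩ := he
          rcases hbody e heE with h | h
          · exact Or.inl (Finset.subset_inter hbW h)
          · exact Or.inr (Finset.subset_inter hbW h)
        · rw [show (H.induced W).induced W1 = H.induced W1 from
            induced_induced H Finset.inter_subset_left,
            ← induced_induced H (Finset.inter_subset_right (s₁ := W) (s₂ := U1))]
          refine ih1 W1 ?_ hne1' ?_
          · exact Finset.inter_subset_right
          · intro e he
            simp only [induced, Finset.mem_filter] at he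
            obtain ⟨heE, hbU1, _⟩ := he
            rcases hdich e heE with h | h
            · exact Or.inl (Finset.subset_inter h hbU1)
            · exact Or.inr (h.mono_right Finset.inter_subset_left)
        · rw [show (H.induced W).induced W2 = H.induced W2 from
            induced_induced H Finset.inter_subset_left,
            ← induced_induced H (Finset.inter_subset_right (s₁ := W) (s₂ := U2))]
          refine ih2 W2 ?_ hne2' ?_
          · exact Finset.inter_subset_right
          · intro e he
            simp only [induced, Finset.mem_filter] at he
            obtain ⟨heE, hbU2, _⟩ := he
            rcases hdich e heE with h | h
            · exact Or.inl (Finset.subset_inter h hbU2)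
            · exact Or.inr (h.mono_right Finset.inter_subset_left)
      · -- W2 empty, so W ⊆ U1
        have hWU1 : W ⊆ U1 := by
          rw [Finset.not_nonempty_iff_eq_empty] at hne2'
          rw [← hWsplit, hne2', Finset.union_empty]
          exact Finset.inter_subset_right
        rw [← induced_induced H hWU1]
        refine ih1 W (by simpa [induced] using hWU1) hWne ?_
        intro e he
        simp only [induced, Finset.mem_filter] at he
        exact hdich e he.1
    · -- W1 empty, so W ⊆ U2
      have hWU2 : W ⊆ U2 := by
        rw [Finset.not_nonempty_iff_eq_empty] at hne1'
        rw [← hWsplit, hne1', Finset.empty_union]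
        exact Finset.inter_subset_right
      rw [← induced_induced H hWU2]
      refine ih2 W (by simpa [induced] using hWU2) hWne ?_
      intro e he
      simp only [induced, Finset.mem_filter] at he
      exact hdich e he.1

/-- If H is not body-connected and C is a body-connected component of H,
then H is H-decomposable iff both H[C] and H[U \ C] are H-decomposable. -/
theorem hDecomposable_iff_components (H : Dihypergraph α)
    (hnc : ¬ H.BodyConnected) (C : Finset α) (hC : H.IsBodyComponent C) :
    HDecomposable H ↔
      HDecomposable (H.induced C) ∧ HDecomposable (H.induced (H.U \ C)) := by
  have hCsub : C ⊆ H.U := hC.2.1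
  have hsd_ne : (H.U \ C).Nonempty := by
    rw [Finset.sdiff_nonempty]
    intro hUC
    have hCU : C = H.U := Finset.Subset.antisymm hCsub hUC
    exact hnc (fun v hv v' hv' => hC.2.2.1 v (hCU ▸ hv) v' (hCU ▸ hv'))
  have hdichC : ∀ e ∈ H.E, e.1 ⊆ C ∨ Disjoint e.1 C :=
    fun e he => body_subset_or_disjoint hC he
  have hdichD : ∀ e ∈ H.E, e.1 ⊆ H.U \ C ∨ Disjoint e.1 (H.U \ C) := by
    intro e he
    rcases hdichC e he with h | h
    · exact Or.inr (Finset.sdiff_disjoint.symm.mono_left h)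
    · exact Or.inl (Finset.subset_sdiff.mpr ⟨H.body_sub e he, h⟩)
  constructor
  · intro h
    exact ⟨induced_decomposable h C hCsub hC.1 hdichC,
      induced_decomposable h (H.U \ C) Finset.sdiff_subset hsd_ne hdichD⟩
  · rintro ⟨h1, h2⟩
    refine HDecomposable.split H C (H.U \ C)
      ⟨hC.1, hsd_ne, ?_, Finset.disjoint_sdiff, ?_⟩ h1 h2
    · rw [Finset.union_sdiff_of_subset hCsub]
    · intro e he
      rcases hdichC e he with h | h
      · exact Or.inl h
      · exact Or.inr (Finset.subset_sdiff.mpr ⟨H.body_sub e he, h⟩)
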